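/- Let G = K_p \ {1,2}. For every subset S ⊆ {3,...,p} there exists a DAG D_S with skeleton G whose set of v-structures is exactly {1 → i ← 2 : i ∈ S}. -/

import Mathlib

open scoped Classical

/-- A directed acyclic graph on vertex set `Fin p`. -/
structure DAGraph (p : ℕ) where
  E : Fin p → Fin p → Prop
  acyclic : ∀ i, ¬ Relation.TransGen E i i

/-- The characteristic imset of a directed graph given by the relation `E`. -/
noncomputable def imsetRel {p : ℕ} (E : Fin p → Fin p → Prop) (S : Finset (Fin p)) : ℝ :=
  if ∃ i ∈ S, ∀ j ∈ S, j ≠ i → E j i then 1 else 0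

/-- The skeleton (underlying undirected graph) of a DAG. -/
def DAGraph.skeleton {p : ℕ} (G : DAGraph p) : SimpleGraph (Fin p) where
  Adj a b := G.E a b ∨ G.E b a
  symm := ⟨fun a b h => Or.symm h⟩
  loopless := ⟨fun a h =>
    h.elim (fun h' => G.acyclic a (Relation.TransGen.single h'))
      (fun h' => G.acyclic a (Relation.TransGen.single h'))⟩

/-- The characteristic imset of a DAG. -/
noncomputable def DAGraph.cim {p : ℕ} (G : DAGraph p) : Finset (Fin p) → ℝ := imsetRel G.E

/-- `G.vStruct a b c` : `a → b ← c` is a v-structure (with `a`, `c` non-adjacent). -/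
def DAGraph.vStruct {p : ℕ} (G : DAGraph p) (a b c : Fin p) : Prop :=
  a ≠ c ∧ G.E a b ∧ G.E c b ∧ ¬ G.skeleton.Adj a c

/-- The relation obtained from `E` by reversing the single edge `i → j`. -/
def reverseRel {p : ℕ} (E : Fin p → Fin p → Prop) (i j : Fin p) : Fin p → Fin p → Prop :=
  fun a b => (E a b ∧ ¬(a = i ∧ b = j)) ∨ (a = j ∧ b = i)

/-- The complete graph on `Fin p` with the single edge between vertices `0` and `1`
(i.e. vertices `1` and `2` in one-based notation) removed. -/
def completeMinus (p : ℕ) : SimpleGraph (Fin p) where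
  Adj a b := a ≠ b ∧ ¬(((a : ℕ) = 0 ∧ (b : ℕ) = 1) ∨ ((a : ℕ) = 1 ∧ (b : ℕ) = 0))
  symm := by
    constructor
    rintro a b ⟨h1, h2⟩
    exact ⟨h1.symm, by tauto⟩
  loopless := ⟨fun a h => h.1 rfl⟩

/-! Rank the vertices so that those outside `S` lie below `0, 1` and those in `S` above them,
and orient every edge of `completeMinus p` upward; this is acyclic since the rank increases along
edges. A v-structure `a → b ← c` needs `a, c` non-adjacent, i.e. `{a, c} = {0, 1}`, and `b` above
both, i.e. `b ∈ S`. -/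

namespace DAGraph

variable {p : ℕ} {β : Type*} [LinearOrder β]

def ofRank (H : SimpleGraph (Fin p)) (f : Fin p → β) : DAGraph p where
  E a b := H.Adj a b ∧ f a < f b
  acyclic i hi := by
    have rank_lt : ∀ a b, Relation.TransGen (fun a b => H.Adj a b ∧ f a < f b) a b → f a < f b :=
      fun _ _ h => h.rec (fun hab => hab.2) (fun _ hbc ih => ih.trans hbc.2)
    exact lt_irrefl _ (rank_lt i i hi)

variable {H : SimpleGraph (Fin p)} {f : Fin p → β}

theorem skeleton_ofRank (hf : Function.Injective f) : (ofRank H f).skeleton = H := by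
  ext a b
  refine ⟨fun h => h.elim And.left fun h => h.1.symm, fun hab => ?_⟩
  rcases lt_or_gt_of_ne (hf.ne (H.ne_of_adj hab)) with h | h
  · exact Or.inl ⟨hab, h⟩
  · exact Or.inr ⟨hab.symm, h⟩

theorem vStruct_ofRank (hf : Function.Injective f) (a b c : Fin p) :
    (ofRank H f).vStruct a b c ↔
      a ≠ c ∧ (H.Adj a b ∧ f a < f b) ∧ (H.Adj c b ∧ f c < f b) ∧ ¬ H.Adj a c := by
  rw [vStruct, skeleton_ofRank hf]
  rfl

end DAGraph

def tierRank {p : ℕ} (S : Finset (Fin p)) (v : Fin p) : ℕ :=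
  if (v : ℕ) ≤ 1 then p + v else if v ∈ S then 2 * p + v else v

theorem tierRank_injective {p : ℕ} (S : Finset (Fin p)) : Function.Injective (tierRank S) := by
  intro a b hab
  have := a.isLt
  have := b.isLt
  unfold tierRank at hab
  split_ifs at hab <;> omega

theorem tierRank_lt_iff_mem {p : ℕ} {S : Finset (Fin p)} {a b : Fin p} (ha : (a : ℕ) ≤ 1)
    (hb : 2 ≤ (b : ℕ)) : tierRank S a < tierRank S b ↔ b ∈ S := by
  have := b.isLt
  unfold tierRank
  rw [if_pos ha, if_neg (by omega)]
  split_ifs with hbS <;> simp only [hbS, iff_true, iff_false] <;> omega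

theorem stmt16_general (p : ℕ) (S : Finset (Fin p)) (hS : ∀ v ∈ S, 2 ≤ (v : ℕ)) :
    ∃ D : DAGraph p, D.skeleton = completeMinus p ∧
      ∀ a b c : Fin p, D.vStruct a b c ↔
        (b ∈ S ∧ (((a : ℕ) = 0 ∧ (c : ℕ) = 1) ∨ ((a : ℕ) = 1 ∧ (c : ℕ) = 0))) := by
  refine ⟨.ofRank (completeMinus p) (tierRank S),
    DAGraph.skeleton_ofRank (tierRank_injective S), fun a b c => ?_⟩
  simp only [DAGraph.vStruct_ofRank (tierRank_injective S), completeMinus, ne_eq, Fin.ext_iff]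
  constructor
  · rintro ⟨hac, ⟨⟨hab, -⟩, hfab⟩, ⟨⟨hcb, -⟩, -⟩, hnadj⟩
    have hpair : ((a : ℕ) = 0 ∧ (c : ℕ) = 1) ∨ ((a : ℕ) = 1 ∧ (c : ℕ) = 0) := by tauto
    exact ⟨(tierRank_lt_iff_mem (by omega) (by omega)).1 hfab, hpair⟩
  · rintro ⟨hbS, hpair⟩
    have hb := hS b hbS
    refine ⟨by omega, ⟨⟨by omega, by omega⟩, ?_⟩, ⟨⟨by omega, by omega⟩, ?_⟩, by tauto⟩ <;>
      exact (tierRank_lt_iff_mem (by omega) hb).2 hbS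

/-- Let `G = K_p` minus the edge `{1,2}` (`p ≥ 3`). For every set `S` of
vertices other than `1` and `2` there is a DAG `D_S` with skeleton `G` whose v-structures
are exactly `1 → i ← 2` for `i ∈ S`. -/
theorem stmt16 (p : ℕ) (hp : 3 ≤ p) (S : Finset (Fin p)) (hS : ∀ v ∈ S, 2 ≤ (v : ℕ)) :
    ∃ D : DAGraph p, D.skeleton = completeMinus p ∧
      ∀ a b c : Fin p, D.vStruct a b c ↔
        (b ∈ S ∧ (((a : ℕ) = 0 ∧ (c : ℕ) = 1) ∨ ((a : ℕ) = 1 ∧ (c : ℕ) = 0))) :=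
  stmt16_general p S hS
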